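/- arXiv:2210.17327 — 2 statements merged into one kernel-verified Lean document; each statement's English description precedes it below -/
import Mathlib

section
/- Fix γ > 0 and 0 < σ_min < σ_max, and let λ₁(t) = λ_ξ(t) with ξ = 0 and λ₂(t) = λ_ξ(t) with ξ = γ. The matrix-valued function Σ(t) = λ₁(t) P̄ + λ₂(t) P̂ satisfies the Lyapunov differential equation Σ′(t) = −γ P̂ Σ(t) − γ Σ(t) P̂ + g(t)² I_K for all t ∈ ℝ, with initial condition Σ(0) = 0. -/
/-!
`P̄` and `P̂ = 1 - P̄` are complementary projections, so `P̂ Σ = Σ P̂ = λ₂ P̂` and the Lyapunov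
equation decouples into the scalar equations `λ' = -2ξ λ + g²` on the ranges of `P̄` (`ξ = 0`)
and `P̂` (`ξ = γ`). Each `λ_ξ` solves its equation with `λ_ξ(0) = 0`, since
`g(t)² = 2 σ_min² ρ^{2t} log ρ` is exactly the forcing term left over when differentiating
`ρ^{2t} - e^{-2ξt}`.
-/

attribute [local instance] Matrix.normedAddCommGroup Matrix.normedSpace

open Real Matrix

theorem isIdempotentElem_inv_card_smul_vecMulVec_one {𝕜 n : Type*} [Field 𝕜] [CharZero 𝕜]
    [Fintype n] [Nonempty n] :
    IsIdempotentElem ((Fintype.card n : 𝕜)⁻¹ • vecMulVec (fun _ : n => (1 : 𝕜)) fun _ : n => 1) := by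
  rw [IsIdempotentElem, smul_mul_smul, vecMulVec_mul_vecMulVec]
  ext i j
  simp [vecMulVec_apply, dotProduct]

theorem IsIdempotentElem.lyapunov_smul_add_smul_one_sub {R A : Type*} [CommRing R] [Ring A]
    [Algebra R A] {p : A} (hp : IsIdempotentElem p) (γ a b c : R) :
    (-γ) • ((1 - p) * (a • p + b • (1 - p))) - γ • ((a • p + b • (1 - p)) * (1 - p)) + c • 1
      = c • p + (c - 2 * γ * b) • (1 - p) := by
  rw [mul_add, add_mul, mul_smul_comm, mul_smul_comm, smul_mul_assoc, smul_mul_assoc,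
    hp.one_sub_mul_self, hp.mul_one_sub_self, hp.one_sub.eq, smul_zero, zero_add,
    ← add_sub_cancel p 1]
  module

noncomputable def lyapunovEigenvalue (σ ρ ξ t : ℝ) : ℝ :=
  σ ^ 2 * (ρ ^ (2 * t) - exp (-(2 * ξ * t))) * log ρ / (ξ + log ρ)

@[simp]
theorem lyapunovEigenvalue_zero (σ ρ ξ : ℝ) : lyapunovEigenvalue σ ρ ξ 0 = 0 := by
  simp [lyapunovEigenvalue]

theorem hasDerivAt_lyapunovEigenvalue (σ : ℝ) {ρ ξ : ℝ} (hρ : 0 < ρ) (hξ : ξ + log ρ ≠ 0)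
    (t : ℝ) :
    HasDerivAt (lyapunovEigenvalue σ ρ ξ)
      (-(2 * ξ) * lyapunovEigenvalue σ ρ ξ t + σ ^ 2 * ρ ^ (2 * t) * (2 * log ρ)) t := by
  have hrpow : HasDerivAt (fun t : ℝ => ρ ^ (2 * t)) (ρ ^ (2 * t) * log ρ * 2) t :=
    (hasStrictDerivAt_const_rpow hρ (2 * t)).hasDerivAt.comp t ((hasDerivAt_id t).const_mul 2)
      |>.congr_deriv (by simp)
  have hexp : HasDerivAt (fun t : ℝ => exp (-(2 * ξ * t))) (exp (-(2 * ξ * t)) * -(2 * ξ)) t := by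
    simpa using ((hasDerivAt_id t).const_mul (2 * ξ)).neg.exp
  have hfun : lyapunovEigenvalue σ ρ ξ =
      fun s => σ ^ 2 * log ρ / (ξ + log ρ) * (ρ ^ (2 * s) - exp (-(2 * ξ * s))) := by
    funext s
    rw [lyapunovEigenvalue]
    ring
  rw [hfun]
  refine ((hrpow.sub hexp).const_mul _).congr_deriv ?_
  field_simp
  ring

theorem sq_mul_rpow_mul_sqrt_two_mul_log {ρ : ℝ} (σ : ℝ) (hρ : 1 ≤ ρ) (t : ℝ) :
    (σ * ρ ^ t * √(2 * log ρ)) ^ 2 = σ ^ 2 * ρ ^ (2 * t) * (2 * log ρ) := by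
  rw [mul_pow, mul_pow, sq_sqrt (by positivity [log_nonneg hρ]), mul_comm 2 t,
    rpow_mul (by linarith), rpow_two]

/-- `Σ(t) = λ₁(t) P̄ + λ₂(t) P̂` (with `λ₁ = λ_{ξ=0}`, `λ₂ = λ_{ξ=γ}`) satisfies the
Lyapunov ODE `Σ′(t) = −γ P̂ Σ(t) − γ Σ(t) P̂ + g(t)² I_K` with `Σ(0) = 0`. -/
theorem stmt_9 (K : ℕ) (hK : 0 < K)
    (γ σmin σmax : ℝ) (hγ : 0 < γ) (hσmin : 0 < σmin) (hσ : σmin < σmax)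
    (Pbar Phat : Matrix (Fin K) (Fin K) ℝ)
    (hPbar : Pbar = (K : ℝ)⁻¹ •
      Matrix.vecMulVec (fun _ : Fin K => (1 : ℝ)) (fun _ : Fin K => (1 : ℝ)))
    (hPhat : Phat = 1 - Pbar)
    (ρ : ℝ) (hρ : ρ = σmax / σmin)
    (g : ℝ → ℝ) (hg : g = fun t => σmin * ρ ^ t * Real.sqrt (2 * Real.log ρ))
    (lam : ℝ → ℝ → ℝ)
    (hlam : lam = fun ξ t =>
      σmin ^ 2 * (ρ ^ (2 * t) - Real.exp (-(2 * ξ * t))) * Real.log ρ / (ξ + Real.log ρ))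
    (lam1 lam2 : ℝ → ℝ) (hlam1 : lam1 = lam 0) (hlam2 : lam2 = lam γ)
    (S : ℝ → Matrix (Fin K) (Fin K) ℝ)
    (hS : S = fun t => lam1 t • Pbar + lam2 t • Phat) :
    (∀ t : ℝ,
        HasDerivAt S
          ((-γ) • (Phat * S t) - γ • (S t * Phat) + (g t) ^ 2 • (1 : Matrix (Fin K) (Fin K) ℝ)) t) ∧
      S 0 = 0 := by
  have hρ1 : 1 < ρ := by rwa [hρ, one_lt_div hσmin]
  have hlog : 0 < log ρ := log_pos hρ1
  have hp : IsIdempotentElem Pbar := by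
    have : Nonempty (Fin K) := Fin.pos_iff_nonempty.mp hK
    simpa [hPbar] using isIdempotentElem_inv_card_smul_vecMulVec_one (𝕜 := ℝ) (n := Fin K)
  have hg2 (t : ℝ) : g t ^ 2 = σmin ^ 2 * ρ ^ (2 * t) * (2 * log ρ) :=
    hg ▸ sq_mul_rpow_mul_sqrt_two_mul_log σmin hρ1.le t
  have hlam' : lam = lyapunovEigenvalue σmin ρ := hlam
  subst hS hPhat hlam1 hlam2 hlam'
  refine ⟨fun t => ?_, by simp⟩
  have hd (ξ : ℝ) (hξ : 0 ≤ ξ) :=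
    hasDerivAt_lyapunovEigenvalue σmin (by positivity) (by positivity : ξ + log ρ ≠ 0) t
  refine ((hd 0 le_rfl).smul_const Pbar |>.add ((hd γ hγ.le).smul_const (1 - Pbar)))
    |>.congr_deriv ?_
  rw [hp.lyapunov_smul_add_smul_one_sub, hg2]
  module
end

section
/- Fix γ > 0, 0 < σ_min < σ_max, and let λ₁(t) = λ_ξ(t) with ξ = 0 and λ₂(t) = λ_ξ(t) with ξ = γ. Then λ₁(t) ≥ λ₂(t) for every t ≥ 0, with strict inequality for t > 0; consequently the cross-source noise covariance (λ₁(t) − λ₂(t))/K is nonnegative and the noise added to the different sources becomes positively correlated as t grows. -/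
/-- `λ₁(t) ≥ λ₂(t)` for every `t ≥ 0`, with strict inequality for `t > 0`; consequently
the cross-source noise covariance `(λ₁(t) − λ₂(t))/K` is nonnegative. -/
theorem stmt_11 (K : ℕ) (hK : 0 < K)
    (σmin σmax γ : ℝ) (hσmin : 0 < σmin) (hσ : σmin < σmax) (hγ : 0 < γ)
    (ρ : ℝ) (hρ : ρ = σmax / σmin)
    (lam : ℝ → ℝ → ℝ)
    (hlam : lam = fun ξ t =>
      σmin ^ 2 * (ρ ^ (2 * t) - Real.exp (-(2 * ξ * t))) * Real.log ρ / (ξ + Real.log ρ))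
    (lam1 lam2 : ℝ → ℝ) (hlam1 : lam1 = lam 0) (hlam2 : lam2 = lam γ) :
    (∀ t : ℝ, 0 ≤ t → lam2 t ≤ lam1 t) ∧
      (∀ t : ℝ, 0 < t → lam2 t < lam1 t) ∧
      (∀ t : ℝ, 0 ≤ t → 0 ≤ (lam1 t - lam2 t) / (K : ℝ)) := by
  subst hρ hlam hlam1 hlam2
  set ρ := σmax / σmin with hρ
  have hρ1 : 1 < ρ := (one_lt_div hσmin).2 hσ
  have hρ0 : 0 < ρ := lt_trans one_pos hρ1
  have hL : 0 < Real.log ρ := Real.log_pos hρ1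
  have hσ2 : 0 < σmin ^ 2 := by positivity
  have hγL : 0 < γ + Real.log ρ := by linarith
  have hrpow : ∀ t : ℝ, ρ ^ (2 * t) = Real.exp (Real.log ρ * (2 * t)) := by
    intro t; rw [Real.rpow_def_of_pos hρ0]
  -- key inequality (weak)
  have key : ∀ t : ℝ, 0 ≤ t →
      Real.log ρ * (1 - Real.exp (-(2 * γ * t))) ≤ γ * (ρ ^ (2 * t) - 1) := by
    intro t ht
    rw [hrpow t]
    have h1 : Real.log ρ * (2 * t) + 1 ≤ Real.exp (Real.log ρ * (2 * t)) :=
      Real.add_one_le_exp _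
    have h2 : -(2 * γ * t) + 1 ≤ Real.exp (-(2 * γ * t)) := Real.add_one_le_exp _
    nlinarith [mul_nonneg hγ.le ht, mul_nonneg hL.le ht]
  have keys : ∀ t : ℝ, 0 < t →
      Real.log ρ * (1 - Real.exp (-(2 * γ * t))) < γ * (ρ ^ (2 * t) - 1) := by
    intro t ht
    rw [hrpow t]
    have hx : Real.log ρ * (2 * t) ≠ 0 := by positivity
    have h1 : Real.log ρ * (2 * t) + 1 < Real.exp (Real.log ρ * (2 * t)) :=
      Real.add_one_lt_exp hx
    have h2 : -(2 * γ * t) + 1 ≤ Real.exp (-(2 * γ * t)) := Real.add_one_le_exp _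
    nlinarith [mul_pos hγ ht, mul_pos hL ht]
  have h0L : (0 : ℝ) + Real.log ρ = Real.log ρ := zero_add _
  have hle : ∀ t : ℝ, 0 ≤ t →
      (fun t => σmin ^ 2 * (ρ ^ (2 * t) - Real.exp (-(2 * γ * t))) * Real.log ρ /
        (γ + Real.log ρ)) t ≤
      (fun t => σmin ^ 2 * (ρ ^ (2 * t) - Real.exp (-(2 * 0 * t))) * Real.log ρ /
        (0 + Real.log ρ)) t := by
    intro t ht
    simp only [h0L, mul_zero, zero_mul, neg_zero, Real.exp_zero]
    rw [div_le_div_iff₀ hγL hL]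
    nlinarith [key t ht, mul_le_mul_of_nonneg_left (key t ht) (mul_pos hσ2 hL).le]
  have hlt : ∀ t : ℝ, 0 < t →
      (fun t => σmin ^ 2 * (ρ ^ (2 * t) - Real.exp (-(2 * γ * t))) * Real.log ρ /
        (γ + Real.log ρ)) t <
      (fun t => σmin ^ 2 * (ρ ^ (2 * t) - Real.exp (-(2 * 0 * t))) * Real.log ρ /
        (0 + Real.log ρ)) t := by
    intro t ht
    simp only [h0L, mul_zero, zero_mul, neg_zero, Real.exp_zero]
    rw [div_lt_div_iff₀ hγL hL]
    nlinarith [keys t ht, mul_lt_mul_of_pos_left (keys t ht) (mul_pos hσ2 hL)]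
  refine ⟨hle, hlt, fun t ht => ?_⟩
  have := hle t ht
  have hK' : (0 : ℝ) < (K : ℝ) := by exact_mod_cast hK
  apply div_nonneg _ hK'.le
  simpa using sub_nonneg.mpr this
end
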